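/- arXiv:1910.08661 — 4 statements merged into one kernel-verified Lean document; each statement's English description precedes it below -/
import Mathlib

section
/- There is a positive constant η such that for every integer k ≥ 2 and every integer n with n ≥ η⁻¹ k log k, the number of integers in {1, 2, …, n} that are relatively prime to each of 1, 2, …, k (equivalently, have no prime factor at most k) is at least η n / log k. Here log denotes the natural logarithm. -/
/-!
For `n < k ^ 99` the primes in `(k, n]` suffice: by Chebyshev there are at least
`n / (2 log n) - k ≥ n / (198 log k) - k` of them. For larger `n` take `b ≈ n ^ (1/3)` and count
the products `s * q` with `s ≤ b` a `k`-rough number and `q ∈ (b, n / s]` a prime. They are distinct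
`k`-rough numbers up to `n`, and by Chebyshev there are at least `(n / (4 log n)) ∑_s 1/s - b²` of
them. Writing every `m ≤ b` as a `k`-smooth times a `k`-rough number gives
`log b ≤ ∑_{m ≤ b} 1/m ≤ ∏_{p ≤ k} (1 - 1/p)⁻¹ · ∑_s 1/s`, and the Euler product is `O(log k)` by
Mertens' estimates (partial summation of `∑_{p ≤ N} log p / p ≤ log N + log 4`, which comes from
`log N! ≥ ∑_{p ≤ N} ⌊N/p⌋ log p`). So `∑_s 1/s ≫ log n / log k`, and the count is `≫ n / log k`.
-/

open Finset Real

lemma Finset.sum_le_sum_comp_of_subset_image {ι κ : Type*} [DecidableEq κ] {s : Finset ι}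
    {t : Finset κ} {g : ι → κ} {f : κ → ℝ} (hf : ∀ y, 0 ≤ f y) (ht : t ⊆ s.image g) :
    ∑ y ∈ t, f y ≤ ∑ x ∈ s, f (g x) :=
  (sum_le_sum_of_subset_of_nonneg ht fun y _ _ ↦ hf y).trans
    (sum_image_le_of_nonneg fun y _ ↦ hf y)

lemma sum_primesLE_div_mul_log_le_log_factorial (N : ℕ) :
    ∑ p ∈ Nat.primesLE N, ((N / p : ℕ) : ℝ) * log p ≤ log N.factorial := by
  have hsupp : N.factorial.factorization.support ⊆ Nat.primesLE N := fun p hp ↦ by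
    have hp' := Nat.support_factorization _ ▸ hp
    exact Nat.mem_primesLE.2 ⟨(Nat.Prime.dvd_factorial (Nat.prime_of_mem_primeFactors hp')).1
      (Nat.dvd_of_mem_primeFactors hp'), Nat.prime_of_mem_primeFactors hp'⟩
  rw [log_nat_eq_sum_factorization, Finsupp.sum_of_support_subset _ hsupp _ (by simp)]
  refine sum_le_sum fun p hp ↦ mul_le_mul_of_nonneg_right ?_ (log_natCast_nonneg p)
  have hp := (Nat.mem_primesLE.1 hp).2
  rw [Nat.factorization_factorial hp (Nat.lt_succ_of_le (Nat.log_le_self p N))]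
  rcases N.eq_zero_or_pos with rfl | hN
  · simp
  exact_mod_cast single_le_sum (f := fun i ↦ N / p ^ i) (fun _ _ ↦ Nat.zero_le _)
    (by simpa using hN : 1 ∈ Ico 1 (N + 1)) |>.trans_eq' (by simp)

lemma sum_primesLE_log_div_le (N : ℕ) :
    ∑ p ∈ Nat.primesLE N, log p / p ≤ log N + log 4 := by
  rcases N.eq_zero_or_pos with rfl | hN
  · simp [Nat.primesLE_zero]; positivity
  have hN' : (0 : ℝ) < N := by exact_mod_cast hN
  have hfloor (p : ℕ) : N * (log p / p) ≤ ((N / p : ℕ) + 1 : ℝ) * log p := by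
    rw [mul_div_left_comm, mul_comm]
    gcongr
    exact (Nat.floor_div_eq_div (K := ℝ) N p ▸ Nat.lt_floor_add_one _).le
  have hfact : log N.factorial ≤ N * log N := by
    rw [← log_pow]
    exact log_le_log (by positivity) (by exact_mod_cast N.factorial_le_pow)
  have htheta : ∑ p ∈ Nat.primesLE N, log p ≤ N * log 4 := by
    rw [← Chebyshev.theta_eq_sum_primesLE_log, mul_comm]
    exact Chebyshev.theta_le_log4_mul_x hN'.le
  have hlegendre := sum_primesLE_div_mul_log_le_log_factorial N
  refine le_of_mul_le_mul_left ?_ hN'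
  calc (N : ℝ) * ∑ p ∈ Nat.primesLE N, log p / p
      ≤ ∑ p ∈ Nat.primesLE N, ((N / p : ℕ) + 1 : ℝ) * log p := by
        rw [mul_sum]; exact sum_le_sum fun p _ ↦ hfloor p
    _ = ∑ p ∈ Nat.primesLE N, ((N / p : ℕ) : ℝ) * log p + ∑ p ∈ Nat.primesLE N, log p := by
        simp only [add_mul, one_mul, sum_add_distrib]
    _ ≤ N * (log N + log 4) := by linarith

lemma mul_inv_sub_inv_le_log_sub_log {M L L' : ℝ} (hL : 0 < L) (hLL' : L ≤ L') (hM : M ≤ L) :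
    M * (L⁻¹ - L'⁻¹) ≤ log L' - log L := by
  have hL' : 0 < L' := hL.trans_le hLL'
  calc M * (L⁻¹ - L'⁻¹) ≤ L * (L⁻¹ - L'⁻¹) :=
        mul_le_mul_of_nonneg_right hM (sub_nonneg.2 (inv_anti₀ hL hLL'))
    _ = 1 - (L' / L)⁻¹ := by field_simp
    _ ≤ log (L' / L) := by
        have := log_le_sub_one_of_pos (inv_pos.2 (div_pos hL' hL))
        rw [log_inv] at this; linarith
    _ = log L' - log L := log_div hL'.ne' hL.ne'

lemma sum_primesLE_succ {M : Type*} [AddCommMonoid M] (f : ℕ → M) (N : ℕ) :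
    ∑ p ∈ Nat.primesLE (N + 1), f p
      = ∑ p ∈ Nat.primesLE N, f p + if (N + 1).Prime then f (N + 1) else 0 := by
  rw [Nat.primesLE_succ]
  split_ifs
  · rw [sum_insert (Nat.notMem_primesLE N), add_comm]
  · rw [add_zero]

/-- Abel summation of `sum_primesLE_log_div_le` against the weight `1 / log p`. -/
lemma sum_primesLE_inv_le_aux {N : ℕ} (hN : 2 ≤ N) :
    ∑ p ∈ Nat.primesLE N, (p : ℝ)⁻¹ ≤ (∑ p ∈ Nat.primesLE N, log p / p - log 4) / log N
      + log (log N) + (log 4 / log 2 - log (log 2)) := by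
  induction N, hN using Nat.le_induction with
  | base =>
    have h2 : Nat.primesLE 2 = {2} := by decide
    simp only [h2, sum_singleton, Nat.cast_ofNat]
    field_simp
    ring_nf; rfl
  | succ N hN ih =>
    set M := ∑ p ∈ Nat.primesLE N, log p / p - log 4
    set L := log (N : ℝ)
    set L' := log ((N + 1 : ℕ) : ℝ)
    have hL : 0 < L := log_pos (by exact_mod_cast hN)
    have hLL' : L ≤ L' := log_le_log (by positivity) (by exact_mod_cast N.le_succ)
    have hstep : M / L + log L ≤ M / L' + log L' := by
      have := mul_inv_sub_inv_le_log_sub_log hL hLL' (M := M)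
        (by linarith [sum_primesLE_log_div_le N])
      rw [mul_sub, ← div_eq_mul_inv, ← div_eq_mul_inv] at this
      linarith
    rw [sum_primesLE_succ, sum_primesLE_succ]
    by_cases hp : (N + 1).Prime
    · have hL' : L' ≠ 0 := (hL.trans_le hLL').ne'
      have : (∑ p ∈ Nat.primesLE N, log p / p + log ((N + 1 : ℕ) : ℝ) / ((N + 1 : ℕ) : ℝ)
          - log 4) / L' = M / L' + ((N + 1 : ℕ) : ℝ)⁻¹ := by
        field_simp; ring
      simp only [hp, if_true, Nat.cast_add_one] at this ⊢
      linarith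
    · simp only [hp, if_false, add_zero]
      linarith

lemma log_four_div_log_two : log 4 / log 2 = 2 := by
  rw [show (4 : ℝ) = 2 ^ 2 by norm_num, log_pow]
  field_simp [(log_pos one_lt_two).ne']
  norm_num

lemma sum_primesLE_inv_le {N : ℕ} (hN : 2 ≤ N) :
    ∑ p ∈ Nat.primesLE N, (p : ℝ)⁻¹ ≤ log (log N) + 4 := by
  have hlogN : 0 < log N := log_pos (by exact_mod_cast hN)
  have hmain : (∑ p ∈ Nat.primesLE N, log p / p - log 4) / log N ≤ 1 :=
    (div_le_one hlogN).2 (by linarith [sum_primesLE_log_div_le N])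
  have hlog2 : -log (log 2) ≤ 1 := by
    have h := log_le_sub_one_of_pos (inv_pos.2 (log_pos one_lt_two))
    rw [log_inv] at h
    have : (log 2)⁻¹ < 2 := by
      rw [inv_lt_comm₀ (log_pos one_lt_two) two_pos]
      linarith [log_two_gt_d9]
    linarith
  linarith [sum_primesLE_inv_le_aux hN, log_four_div_log_two]

lemma inv_one_sub_inv_le_exp {p : ℝ} (hp : 2 ≤ p) : (1 - p⁻¹)⁻¹ ≤ exp (p⁻¹ + 2 * (p ^ 2)⁻¹) := by
  have hp1 : 0 < p - 1 := by linarith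
  calc (1 - p⁻¹)⁻¹ = 1 + (p - 1)⁻¹ := by field_simp; ring
    _ ≤ p⁻¹ + 2 * (p ^ 2)⁻¹ + 1 := by
        rw [add_comm]; gcongr
        rw [inv_le_iff_one_le_mul₀ hp1]
        field_simp
        nlinarith
    _ ≤ exp (p⁻¹ + 2 * (p ^ 2)⁻¹) := add_one_le_exp _

lemma prod_primesLE_inv_one_sub_inv_le {k : ℕ} (hk : 2 ≤ k) :
    ∏ p ∈ Nat.primesLE k, (1 - (p : ℝ)⁻¹)⁻¹ ≤ exp 6 * log k := by
  have hsq : ∑ p ∈ Nat.primesLE k, ((p : ℝ) ^ 2)⁻¹ ≤ 1 := by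
    calc ∑ p ∈ Nat.primesLE k, ((p : ℝ) ^ 2)⁻¹ ≤ ∑ i ∈ Ioc 1 k, ((i : ℝ) ^ 2)⁻¹ := by
          refine sum_le_sum_of_subset_of_nonneg (fun p hp ↦ ?_) (fun _ _ _ ↦ by positivity)
          rw [Nat.primesLE_eq_filter_Ioc_one] at hp
          exact (mem_filter.1 hp).1
      _ ≤ (1 : ℝ)⁻¹ - (k : ℝ)⁻¹ := by exact_mod_cast sum_Ioc_inv_sq_le_sub one_ne_zero (by omega)
      _ ≤ 1 := by simp
  calc ∏ p ∈ Nat.primesLE k, (1 - (p : ℝ)⁻¹)⁻¹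
      ≤ ∏ p ∈ Nat.primesLE k, exp ((p : ℝ)⁻¹ + 2 * ((p : ℝ) ^ 2)⁻¹) := by
        refine prod_le_prod (fun p hp ↦ ?_) (fun p hp ↦ inv_one_sub_inv_le_exp ?_)
        all_goals have := (Nat.mem_primesLE.1 hp).2.two_le
        · have : (p : ℝ)⁻¹ ≤ 1 := inv_le_one_of_one_le₀ (by exact_mod_cast (by omega : 1 ≤ p))
          exact inv_nonneg.2 (by linarith)
        · exact_mod_cast this
    _ = exp (∑ p ∈ Nat.primesLE k, (p : ℝ)⁻¹ + 2 * ∑ p ∈ Nat.primesLE k, ((p : ℝ) ^ 2)⁻¹) := by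
        rw [← exp_sum, sum_add_distrib, mul_sum]
    _ ≤ exp (log (log k) + 6) := by
        exact exp_le_exp.2 (by linarith [sum_primesLE_inv_le hk])
    _ = exp 6 * log k := by
        rw [exp_add, exp_log (log_pos (by exact_mod_cast hk)), mul_comm]

lemma sum_inv_le_prod_inv_one_sub_inv {P A : Finset ℕ} (hP : ∀ p ∈ P, p.Prime)
    (hA : ∀ a ∈ A, a ∈ Nat.factoredNumbers P) :
    ∑ a ∈ A, (a : ℝ)⁻¹ ≤ ∏ p ∈ P, (1 - (p : ℝ)⁻¹)⁻¹ := by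
  classical
  set E := A.sup id + 1
  -- every `a ∈ A` is the image of its exponent vector, whose entries are `< E`
  have hA' :
      A ⊆ (Fintype.piFinset fun _ : P ↦ range E).image fun e ↦ ∏ p : P, (p : ℕ) ^ e p := by
    intro a ha
    obtain ⟨ha0, haP⟩ := Nat.mem_factoredNumbers_iff_primeFactors_subset.1 (hA a ha)
    refine mem_image.2 ⟨fun p ↦ a.factorization p, Fintype.mem_piFinset.2 fun p ↦ ?_, ?_⟩
    · exact mem_range.2 (Nat.lt_succ_of_le ((Nat.factorization_lt _ ha0).le.trans
        (le_sup (f := id) ha)))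
    · rw [prod_coe_sort P fun p ↦ p ^ a.factorization p, ← Finsupp.prod_of_support_subset _
        (Nat.support_factorization a ▸ haP) _ (fun _ _ ↦ pow_zero _),
        Nat.prod_factorization_pow_eq_self ha0]
  calc ∑ a ∈ A, (a : ℝ)⁻¹
      ≤ ∑ e ∈ Fintype.piFinset fun _ : P ↦ range E, ((∏ p : P, (p : ℕ) ^ e p : ℕ) : ℝ)⁻¹ :=
        sum_le_sum_comp_of_subset_image (fun _ ↦ by positivity) hA'
    _ = ∏ p ∈ P, ∑ i ∈ range E, (p : ℝ)⁻¹ ^ i := by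
        rw [← prod_coe_sort P, prod_univ_sum]; push_cast; simp only [prod_inv_distrib, inv_pow]
    _ ≤ ∏ p ∈ P, (1 - (p : ℝ)⁻¹)⁻¹ := by
        refine prod_le_prod (fun _ _ ↦ sum_nonneg fun _ _ ↦ by positivity) fun p hpP ↦ ?_
        have hp : (1 : ℝ) < p := by exact_mod_cast (hP p hpP).one_lt
        have := geom_sum_Ico_le_of_lt_one (m := 0) (n := E)
          (inv_nonneg.2 (zero_le_one.trans hp.le)) (inv_lt_one_of_one_lt₀ hp)
        rwa [← Finset.range_eq_Ico, pow_zero, one_div] at this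

lemma card_primesLE_le (N : ℕ) : #(Nat.primesLE N) ≤ N := by
  simpa [Nat.primesLE_eq_filter_Icc_one] using card_filter_le (Icc 1 N) Nat.Prime

lemma mem_primesLE_sdiff_primesLE {b c q : ℕ} :
    q ∈ Nat.primesLE c \ Nat.primesLE b ↔ q.Prime ∧ b < q ∧ q ≤ c := by
  simp only [mem_sdiff, Nat.mem_primesLE]
  grind

lemma div_two_log_le_primeCounting {N : ℕ} (hN : 64 ≤ N) :
    N / (2 * log N) ≤ Nat.primeCounting N := by
  have hN' : (64 : ℝ) ≤ N := by exact_mod_cast hN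
  have hlogN : 0 < log N := log_pos (by linarith)
  have hlog : log (N + 1) ≤ (N + 1) / 8 + 3 * log 2 - 1 := by
    have := log_le_sub_one_of_pos (show (0 : ℝ) < (N + 1) / 8 by positivity)
    rw [log_div (by positivity) (by norm_num), show (8 : ℝ) = 2 ^ 3 by norm_num, log_pow] at this
    push_cast at this
    linarith
  refine le_trans ?_ (Chebyshev.pi_ge N)
  rw [div_le_div_iff₀ (by positivity) hlogN]
  have : (N : ℝ) ≤ 2 * (N * log 2 - log (N + 1)) := by
    nlinarith [log_two_gt_d9, log_two_lt_d9]
  nlinarith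

lemma div_mul_log_le_primeCounting_div {n s : ℕ} (hs : 64 ≤ n / s) :
    n / (4 * s * log n) ≤ Nat.primeCounting (n / s) := by
  have hs0 : 0 < s := Nat.pos_of_ne_zero fun h ↦ by simp [h] at hs
  have hN : (64 : ℝ) ≤ (n / s : ℕ) := by exact_mod_cast hs
  have hdiv : (n : ℝ) / s ≤ 2 * (n / s : ℕ) := by
    have := (Nat.floor_div_eq_div (K := ℝ) n s ▸ Nat.lt_floor_add_one ((n : ℝ) / s)).le
    linarith
  have hlog : log (n / s : ℕ) ≤ log n :=
    log_le_log (by linarith) (by exact_mod_cast Nat.div_le_self n s)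
  have hlogN : 0 < log (n / s : ℕ) := log_pos (by linarith)
  calc (n : ℝ) / (4 * s * log n) = n / s / (4 * log n) := by
        rw [div_div, mul_comm (s : ℝ), mul_assoc, mul_assoc, mul_comm (s : ℝ)]
    _ ≤ 2 * (n / s : ℕ) / (4 * log n) := by gcongr
    _ = (n / s : ℕ) / (2 * log n) := by ring
    _ ≤ (n / s : ℕ) / (2 * log (n / s : ℕ)) := by gcongr
    _ ≤ Nat.primeCounting (n / s) := div_two_log_le_primeCounting hs

/-- Not Mathlib's `Nat.roughNumbersUpTo N k`, which holds the numbers that are not `k`-smooth. -/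
def roughUpTo (k n : ℕ) : Finset ℕ := {m ∈ Icc 1 n | ∀ p ∈ m.primeFactors, k < p}

lemma mem_roughUpTo {k n m : ℕ} :
    m ∈ roughUpTo k n ↔ (1 ≤ m ∧ m ≤ n) ∧ ∀ p ∈ m.primeFactors, k < p := by
  rw [roughUpTo, mem_filter, mem_Icc]

lemma forall_mem_Icc_gcd_eq_one_iff {k m : ℕ} (hm : m ≠ 0) :
    (∀ j ∈ Icc 1 k, m.gcd j = 1) ↔ ∀ p ∈ m.primeFactors, k < p := by
  refine ⟨fun h p hp ↦ ?_, fun h j hj ↦ Nat.coprime_of_dvd fun q hq hqm hqj ↦ ?_⟩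
  · have hp' := Nat.prime_of_mem_primeFactors hp
    by_contra! hpk
    have := (h p (mem_Icc.2 ⟨hp'.one_le, hpk⟩))
    exact (Nat.Prime.coprime_iff_not_dvd hp').1 (Nat.Coprime.symm this)
      (Nat.dvd_of_mem_primeFactors hp)
  · have := h q (Nat.mem_primeFactors.2 ⟨hq, hqm, hm⟩)
    have := Nat.le_of_dvd (mem_Icc.1 hj).1 hqj
    have := (mem_Icc.1 hj).2
    omega

lemma setOf_forall_gcd_eq_one_eq_roughUpTo (k n : ℕ) :
    {m : ℕ | m ∈ Icc 1 n ∧ ∀ j ∈ Icc 1 k, m.gcd j = 1} = roughUpTo k n := by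
  ext m
  rw [Set.mem_ofPred_eq, mem_coe, roughUpTo, mem_filter]
  exact and_congr_right fun hm ↦ forall_mem_Icc_gcd_eq_one_iff (by rw [mem_Icc] at hm; omega)

lemma exists_mul_eq_of_smooth_of_rough (k : ℕ) {m : ℕ} (hm : m ≠ 0) :
    ∃ a s, a ∈ Nat.factoredNumbers (Nat.primesLE k) ∧ (∀ p ∈ s.primeFactors, k < p) ∧
      a * s = m := by
  induction m using Nat.recOnMul with
  | zero => exact absurd rfl hm
  | one =>
    exact ⟨1, 1, Nat.mem_factoredNumbers_of_primeFactors_subset one_ne_zero (by simp), by simp, rfl⟩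
  | prime p hp =>
    by_cases hpk : p ≤ k
    · refine ⟨p, 1, ?_, by simp, mul_one p⟩
      exact Nat.mem_factoredNumbers_of_primeFactors_subset hp.ne_zero (by
        simpa [hp.primeFactors] using Nat.mem_primesLE.2 ⟨hpk, hp⟩)
    · exact ⟨1, p, Nat.mem_factoredNumbers_of_primeFactors_subset one_ne_zero (by simp),
        by simpa [hp.primeFactors] using hpk, one_mul p⟩
  | mul x y hx hy =>
    obtain ⟨a, s, ha, hs, rfl⟩ := hx (left_ne_zero_of_mul hm)
    obtain ⟨b, t, hb, ht, rfl⟩ := hy (right_ne_zero_of_mul hm)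
    refine ⟨a * b, s * t, Nat.mul_mem_factoredNumbers ha hb, ?_, by ring⟩
    rw [Nat.primeFactors_mul (right_ne_zero_of_mul (left_ne_zero_of_mul hm))
      (right_ne_zero_of_mul (right_ne_zero_of_mul hm))]
    intro p hp
    rcases mem_union.1 hp with hp | hp
    exacts [hs p hp, ht p hp]

/-- Every `m ≤ b` is a `k`-smooth times a `k`-rough number, so the harmonic sum up to `b` is at
most the product of the smooth and the rough reciprocal sums. -/
lemma log_le_prod_mul_sum_inv_roughUpTo (k b : ℕ) :
    log (b + 1) ≤
      (∏ p ∈ Nat.primesLE k, (1 - (p : ℝ)⁻¹)⁻¹) * ∑ s ∈ roughUpTo k b, (s : ℝ)⁻¹ := by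
  set S := {a ∈ Icc 1 b | a ∈ Nat.factoredNumbers (Nat.primesLE k)}
  have hsplit : Icc 1 b ⊆ (S ×ˢ roughUpTo k b).image fun x ↦ x.1 * x.2 := by
    intro m hm
    obtain ⟨hm1, hmb⟩ := mem_Icc.1 hm
    obtain ⟨a, s, ha, hs, rfl⟩ := exists_mul_eq_of_smooth_of_rough k (by omega : m ≠ 0)
    have ha0 := Nat.pos_of_ne_zero (left_ne_zero_of_mul (by omega : a * s ≠ 0))
    have hs0 := Nat.pos_of_ne_zero (right_ne_zero_of_mul (by omega : a * s ≠ 0))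
    refine mem_image.2 ⟨(a, s), mem_product.2 ⟨mem_filter.2 ⟨mem_Icc.2 ⟨ha0, ?_⟩, ha⟩,
      mem_roughUpTo.2 ⟨⟨hs0, ?_⟩, hs⟩⟩, rfl⟩
    · exact (Nat.le_mul_of_pos_right a hs0).trans hmb
    · exact (Nat.le_mul_of_pos_left s ha0).trans hmb
  calc log (b + 1) ≤ ∑ m ∈ Icc 1 b, (m : ℝ)⁻¹ := by
        have := log_add_one_le_harmonic b
        rw [harmonic_eq_sum_Icc] at this
        push_cast at this
        exact this
    _ ≤ ∑ x ∈ S ×ˢ roughUpTo k b, (((x.1 * x.2 : ℕ)) : ℝ)⁻¹ :=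
        sum_le_sum_comp_of_subset_image (fun _ ↦ by positivity) hsplit
    _ = (∑ a ∈ S, (a : ℝ)⁻¹) * ∑ s ∈ roughUpTo k b, (s : ℝ)⁻¹ := by
        rw [sum_mul_sum, sum_product]; push_cast; simp only [mul_inv]
    _ ≤ _ := by
        gcongr
        exact sum_inv_le_prod_inv_one_sub_inv (fun p hp ↦ (Nat.mem_primesLE.1 hp).2)
          fun a ha ↦ (mem_filter.1 ha).2

/-- The map `(s, q) ↦ s * q` is injective because `q > b ≥ s` is the largest prime factor. -/
lemma sum_card_primesLE_sdiff_le_card_roughUpTo {k b : ℕ} (hkb : k ≤ b) (n : ℕ) :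
    ∑ s ∈ roughUpTo k b, #(Nat.primesLE (n / s) \ Nat.primesLE b) ≤ #(roughUpTo k n) := by
  rw [← card_sigma]
  refine card_le_card_of_injOn (fun x ↦ x.1 * x.2) (fun x hx ↦ ?_) fun x hx y hy hxy ↦ ?_
  · show x.1 * x.2 ∈ roughUpTo k n
    obtain ⟨hs, hq⟩ := mem_sigma.1 hx
    obtain ⟨⟨hs1, -⟩, hsk⟩ := mem_roughUpTo.1 hs
    obtain ⟨hq, hbq, hqn⟩ := mem_primesLE_sdiff_primesLE.1 hq
    refine mem_roughUpTo.2 ⟨⟨Nat.mul_pos hs1 hq.pos, ?_⟩, fun p hp ↦ ?_⟩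
    · rw [mul_comm]; exact (Nat.le_div_iff_mul_le hs1).1 hqn
    · rw [Nat.primeFactors_mul (by omega) hq.ne_zero] at hp
      rcases mem_union.1 hp with hp | hp
      · exact hsk p hp
      · rw [hq.primeFactors, mem_singleton] at hp
        omega
  · obtain ⟨hxs, hxq⟩ := mem_sigma.1 hx
    obtain ⟨hys, hyq⟩ := mem_sigma.1 hy
    obtain ⟨⟨hxs1, hxsb⟩, -⟩ := mem_roughUpTo.1 hxs
    obtain ⟨⟨hys1, hysb⟩, -⟩ := mem_roughUpTo.1 hys
    obtain ⟨hxq, hbxq, -⟩ := mem_primesLE_sdiff_primesLE.1 hxq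
    obtain ⟨hyq, hbyq, -⟩ := mem_primesLE_sdiff_primesLE.1 hyq
    have hxy : x.1 * x.2 = y.1 * y.2 := hxy
    have hq : x.2 = y.2 := by
      rcases (Nat.Prime.dvd_mul hxq).1 (hxy ▸ dvd_mul_left _ _) with h | h
      · exact absurd (Nat.le_of_dvd hys1 h) (by omega)
      · exact (Nat.prime_dvd_prime_iff_eq hxq hyq).1 h
    have hs : x.1 = y.1 := Nat.eq_of_mul_eq_mul_right hxq.pos (hq ▸ hxy)
    exact Sigma.ext hs (heq_of_eq hq)

lemma card_primesLE_sdiff_le_card_roughUpTo {k : ℕ} (hk : 1 ≤ k) (n : ℕ) :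
    #(Nat.primesLE n \ Nat.primesLE k) ≤ #(roughUpTo k n) := by
  have h1 : 1 ∈ roughUpTo k k := mem_roughUpTo.2 ⟨⟨le_rfl, hk⟩, by simp⟩
  simpa using (single_le_sum (fun _ _ ↦ Nat.zero_le _) h1).trans
    (sum_card_primesLE_sdiff_le_card_roughUpTo le_rfl n)

lemma sum_div_mul_log_sub_le_card_roughUpTo {k b n : ℕ} (hkb : k ≤ b) (hb : 64 ≤ n / b) :
    n / (4 * log n) * ∑ s ∈ roughUpTo k b, (s : ℝ)⁻¹ - b * b ≤ #(roughUpTo k n) := by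
  have hR : #(roughUpTo k b) ≤ b := (card_filter_le _ _).trans (by simp)
  calc n / (4 * log n) * ∑ s ∈ roughUpTo k b, (s : ℝ)⁻¹ - b * b
      ≤ ∑ s ∈ roughUpTo k b, ((Nat.primeCounting (n / s) : ℝ) - b) := by
        rw [sum_sub_distrib, mul_sum, sum_const, nsmul_eq_mul]
        gcongr with s hs
        · obtain ⟨⟨hs1, hsb⟩, -⟩ := mem_roughUpTo.1 hs
          rw [← div_eq_mul_inv, div_div, mul_right_comm]
          exact div_mul_log_le_primeCounting_div (hb.trans (Nat.div_le_div_left hsb hs1))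
    _ ≤ ∑ s ∈ roughUpTo k b, (#(Nat.primesLE (n / s) \ Nat.primesLE b) : ℝ) := by
        gcongr with s
        rw [sub_le_iff_le_add, ← Nat.primesLE_card_eq_primeCounting]
        exact_mod_cast card_le_card_sdiff_add_card.trans (by gcongr; exact card_primesLE_le b)
    _ ≤ #(roughUpTo k n) := by exact_mod_cast sum_card_primesLE_sdiff_le_card_roughUpTo hkb n

lemma div_le_card_roughUpTo_of_lt_pow {k n : ℕ} (hk : 2 ≤ k) (hn : n < k ^ 99)
    (hkn : 10000 * k * log k ≤ n) : n / (10000 * log k) ≤ #(roughUpTo k n) := by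
  have hk' : (2 : ℝ) ≤ k := by exact_mod_cast hk
  have hlogk : log 2 ≤ log k := log_le_log two_pos hk'
  have hlog2 := log_two_gt_d9
  have hn64 : (64 : ℝ) ≤ n := by nlinarith
  have hlogn : log n ≤ 99 * log k := by
    calc log n ≤ log ((k : ℝ) ^ 99) := log_le_log (by linarith) (by exact_mod_cast hn.le)
      _ = 99 * log k := by rw [log_pow]; norm_num
  have hprimes : (Nat.primeCounting n : ℝ) - k ≤ #(roughUpTo k n) := by
    rw [sub_le_iff_le_add, ← Nat.primesLE_card_eq_primeCounting]
    exact_mod_cast card_le_card_sdiff_add_card.trans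
      (add_le_add (card_primesLE_sdiff_le_card_roughUpTo (by omega) n) (card_primesLE_le k))
  have hcheb := div_two_log_le_primeCounting (by exact_mod_cast hn64 : 64 ≤ n)
  have hL : 0 < log k := by linarith
  calc (n : ℝ) / (10000 * log k) ≤ n / (2 * (99 * log k)) - n / (10000 * log k) := by
        rw [div_sub_div _ _ (by positivity) (by positivity), div_le_div_iff₀ (by positivity)
          (by positivity)]
        nlinarith [sq_nonneg (log k)]
    _ ≤ n / (2 * log n) - k := by
        gcongr
        · exact mul_pos two_pos (log_pos (by linarith))
        · rw [le_div_iff₀ (by positivity)]; linarith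
    _ ≤ #(roughUpTo k n) := by linarith

lemma exp_six_lt : exp 6 < 404 := by
  rw [show (6 : ℝ) = (6 : ℕ) * 1 by norm_num, exp_nat_mul]
  calc exp 1 ^ 6 < 2.7182818286 ^ 6 := by gcongr; exact exp_one_lt_d9
    _ < 404 := by norm_num

lemma exists_pow_le_lt_succ_pow {m : ℕ} (hm : m ≠ 0) (n : ℕ) :
    ∃ b, b ^ m ≤ n ∧ n < (b + 1) ^ m := by
  have h : ∃ b, n < (b + 1) ^ m := ⟨n, (Nat.lt_succ_self n).trans_le (Nat.le_self_pow hm _)⟩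
  refine ⟨Nat.find h, ?_, Nat.find_spec h⟩
  rcases Nat.eq_zero_or_eq_succ_pred (Nat.find h) with h0 | h0
  · rw [h0, zero_pow hm]; exact Nat.zero_le n
  · rw [h0]
    exact not_lt.1 (Nat.find_min h (Nat.pred_lt (by omega)))

lemma div_le_card_roughUpTo_of_cube_le {k b n : ℕ} (hk : 2 ≤ k) (hkb : 10000 * k ≤ b)
    (hbn : b ^ 3 ≤ n) (hnb : n < (b + 1) ^ 3) :
    n / (24 * exp 6 * log k) ≤ #(roughUpTo k n) := by
  have hb64 : 64 ≤ n / b := by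
    rw [Nat.le_div_iff_mul_le (by omega)]
    calc 64 * b ≤ b * b * b := Nat.mul_le_mul_right b (by nlinarith)
      _ = b ^ 3 := by ring
      _ ≤ n := hbn
  have hlogk : 0 < log k := log_pos (by exact_mod_cast hk)
  rw [mul_assoc]
  set E := exp 6 * log k
  have hEb : 24 * E ≤ b := by
    have : 24 * E ≤ 24 * 404 * k := by
      have := log_le_self (Nat.cast_nonneg k)
      nlinarith [exp_six_lt, exp_pos 6]
    have : (24 * 404 * k : ℝ) ≤ b := by exact_mod_cast (by omega : 24 * 404 * k ≤ b)
    linarith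
  have hn64 : (64 : ℝ) ≤ n := by exact_mod_cast hb64.trans (Nat.div_le_self n b)
  have hlogn : 0 < log n := log_pos (by linarith)
  have hnb' : log n ≤ 3 * log (b + 1) := by
    calc log n ≤ log (((b : ℝ) + 1) ^ 3) :=
          log_le_log (by linarith) (by exact_mod_cast hnb.le)
      _ = 3 * log (b + 1) := by rw [log_pow]; norm_num
  have hsum : log n / (3 * E) ≤ ∑ s ∈ roughUpTo k b, (s : ℝ)⁻¹ := by
    rw [div_le_iff₀ (by positivity)]
    have := (log_le_prod_mul_sum_inv_roughUpTo k b).trans (mul_le_mul_of_nonneg_right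
      (prod_primesLE_inv_one_sub_inv_le hk) (sum_nonneg fun _ _ ↦ by positivity))
    linarith
  have hbb : (b : ℝ) * b ≤ n / (24 * E) := by
    rw [le_div_iff₀ (by positivity)]
    calc (b : ℝ) * b * (24 * E) ≤ b * b * b := by gcongr
      _ ≤ n := by exact_mod_cast (by ring_nf; omega : b * b * b ≤ n)
  calc (n : ℝ) / (24 * E) = n / (4 * log n) * (log n / (3 * E)) - n / (24 * E) := by
        field_simp; ring
    _ ≤ n / (4 * log n) * ∑ s ∈ roughUpTo k b, (s : ℝ)⁻¹ - b * b := by gcongr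
    _ ≤ #(roughUpTo k n) := sum_div_mul_log_sub_le_card_roughUpTo (by omega) hb64

lemma div_le_card_roughUpTo_of_pow_le {k n : ℕ} (hk : 2 ≤ k) (hn : k ^ 99 ≤ n) :
    n / (24 * exp 6 * log k) ≤ #(roughUpTo k n) := by
  obtain ⟨b, hbn, hnb⟩ := exists_pow_le_lt_succ_pow three_ne_zero n
  have hkb : k ^ 33 ≤ b := Nat.lt_succ_iff.1 <| (Nat.pow_lt_pow_iff_left three_ne_zero).1 <| by
    rw [← pow_mul]; exact hn.trans_lt hnb
  refine div_le_card_roughUpTo_of_cube_le hk ?_ hbn hnb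
  calc 10000 * k ≤ k ^ 32 * k := Nat.mul_le_mul_right k <|
        (by norm_num : 10000 ≤ 2 ^ 32).trans (Nat.pow_le_pow_left hk 32)
    _ = k ^ 33 := (pow_succ k 32).symm
    _ ≤ b := hkb

/-- There is a positive constant `η` such that for every integer `k ≥ 2` and every integer
`n ≥ η⁻¹ k log k`, the number of integers in `{1, …, n}` relatively prime to each of
`1, 2, …, k` is at least `η n / log k` (natural logarithm). -/
theorem independent_ap_sieve_lemma :
    ∃ η : ℝ, 0 < η ∧
      ∀ k : ℕ, 2 ≤ k →
        ∀ n : ℕ, η⁻¹ * k * Real.log k ≤ (n : ℝ) →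
          η * n / Real.log k ≤
            ({m : ℕ | m ∈ Finset.Icc 1 n ∧ ∀ j ∈ Finset.Icc 1 k, Nat.gcd m j = 1}.ncard : ℝ) := by
  refine ⟨10000⁻¹, by norm_num, fun k hk n hn ↦ ?_⟩
  rw [inv_inv] at hn
  have hlogk : 0 < log k := log_pos (by exact_mod_cast hk)
  rw [setOf_forall_gcd_eq_one_eq_roughUpTo, Set.ncard_coe_finset,
    show (10000 : ℝ)⁻¹ * n / log k = n / (10000 * log k) by ring]
  rcases lt_or_ge n (k ^ 99) with h | h
  · exact div_le_card_roughUpTo_of_lt_pow hk h hn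
  · refine le_trans ?_ (div_le_card_roughUpTo_of_pow_le hk h)
    exact div_le_div_of_nonneg_left (Nat.cast_nonneg n) (by positivity)
      (mul_le_mul_of_nonneg_right (by linarith [exp_six_lt]) hlogk.le)
end

section
/- Let s be a positive integer and suppose 0 ≤ x₁ ≤ x₂ ≤ … ≤ x_s are real numbers, and 0 ≤ yᵢ ≤ xᵢ for each 1 ≤ i ≤ s. If α := Σ_{i=1}^s (xᵢ − yᵢ), then ∏_{i=1}^s yᵢ ≥ (x₁ − α)·∏_{i=2}^s xᵢ. -/
/-! Split off the first factor: `x₁ - α = y₁ - α'` with `α' = Σ_{i ≥ 2} (xᵢ - yᵢ)`, and `y₁ ≤ x₁ ≤ xᵢ`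
for all `i`. It then suffices that `(a - Σ (xᵢ - yᵢ)) ∏ xᵢ ≤ a ∏ yᵢ` whenever `0 ≤ yᵢ ≤ xᵢ` and `a ≤ xᵢ`,
which follows by induction on the index set: adding a factor `j` changes the two sides by amounts whose
difference is `(xⱼ - yⱼ)(a - D - xⱼ) ∏ xᵢ ≤ 0`, where `D ≥ 0` is the previous sum. -/

open Finset

theorem sub_sum_sub_mul_prod_le_mul_prod {ι : Type*} [DecidableEq ι] (S : Finset ι) (x y : ι → ℝ)
    (a : ℝ) (hy0 : ∀ i ∈ S, 0 ≤ y i) (hyx : ∀ i ∈ S, y i ≤ x i) (hax : ∀ i ∈ S, a ≤ x i) :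
    (a - ∑ i ∈ S, (x i - y i)) * ∏ i ∈ S, x i ≤ a * ∏ i ∈ S, y i := by
  induction S using Finset.induction_on with
  | empty => simp
  | insert j S hj ih =>
    simp only [mem_insert, forall_eq_or_imp] at hy0 hyx hax
    rw [sum_insert hj, prod_insert hj, prod_insert hj]
    have ih := ih hy0.2 hyx.2 hax.2
    have hD : 0 ≤ ∑ i ∈ S, (x i - y i) := sum_nonneg fun i hi => sub_nonneg.2 (hyx.2 i hi)
    have hPx : 0 ≤ ∏ i ∈ S, x i := prod_nonneg fun i hi => (hy0.2 i hi).trans (hyx.2 i hi)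
    have hstep : (x j - y j) * (a - ∑ i ∈ S, (x i - y i) - x j) * ∏ i ∈ S, x i ≤ 0 :=
      mul_nonpos_of_nonpos_of_nonneg
        (mul_nonpos_of_nonneg_of_nonpos (sub_nonneg.2 hyx.1) (by linarith [hax.1])) hPx
    calc (a - (x j - y j + ∑ i ∈ S, (x i - y i))) * (x j * ∏ i ∈ S, x i)
        = y j * ((a - ∑ i ∈ S, (x i - y i)) * ∏ i ∈ S, x i)
            + (x j - y j) * (a - ∑ i ∈ S, (x i - y i) - x j) * ∏ i ∈ S, x i := by ring
      _ ≤ y j * (a * ∏ i ∈ S, y i) + 0 := add_le_add (mul_le_mul_of_nonneg_left ih hy0.1) hstep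
      _ = a * (y j * ∏ i ∈ S, y i) := by ring

theorem product_decrease_general (s : ℕ) (hs : 1 ≤ s) (x y : ℕ → ℝ)
    (hmono : ∀ i ∈ Finset.Icc 1 s, ∀ j ∈ Finset.Icc 1 s, i ≤ j → x i ≤ x j)
    (hy0 : ∀ i ∈ Finset.Icc 1 s, 0 ≤ y i)
    (hyx : ∀ i ∈ Finset.Icc 1 s, y i ≤ x i) :
    (x 1 - ∑ i ∈ Finset.Icc 1 s, (x i - y i)) * ∏ i ∈ Finset.Icc 2 s, x i ≤
      ∏ i ∈ Finset.Icc 1 s, y i := by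
  have hsplit : Icc 1 s = insert 1 (Icc 2 s) := (insert_Icc_add_one_left_eq_Icc hs).symm
  have h1 : 1 ∈ Icc 1 s := by simp [hs]
  have htail : Icc 2 s ⊆ Icc 1 s := Icc_subset_Icc_left (by norm_num)
  have hy1x : ∀ i ∈ Icc 2 s, y 1 ≤ x i := fun i hi =>
    (hyx 1 h1).trans (hmono 1 h1 i (htail hi) (mem_Icc.1 (htail hi)).1)
  have key := sub_sum_sub_mul_prod_le_mul_prod (Icc 2 s) x y (y 1)
    (fun i hi => hy0 i (htail hi)) (fun i hi => hyx i (htail hi)) hy1x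
  have h1_notMem_tail : 1 ∉ Icc 2 s := by simp
  rw [hsplit, sum_insert h1_notMem_tail, prod_insert h1_notMem_tail]
  convert key using 2
  ring

/-- If `0 ≤ x₁ ≤ … ≤ x_s`, `0 ≤ yᵢ ≤ xᵢ` for each `i`, and `α = Σᵢ (xᵢ - yᵢ)`, then
`∏ᵢ yᵢ ≥ (x₁ - α) ∏_{i=2}^s xᵢ`. -/
theorem product_decrease (s : ℕ) (hs : 1 ≤ s) (x y : ℕ → ℝ)
    (hx0 : 0 ≤ x 1)
    (hmono : ∀ i ∈ Finset.Icc 1 s, ∀ j ∈ Finset.Icc 1 s, i ≤ j → x i ≤ x j)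
    (hy0 : ∀ i ∈ Finset.Icc 1 s, 0 ≤ y i)
    (hyx : ∀ i ∈ Finset.Icc 1 s, y i ≤ x i) :
    (x 1 - ∑ i ∈ Finset.Icc 1 s, (x i - y i)) * ∏ i ∈ Finset.Icc 2 s, x i ≤
      ∏ i ∈ Finset.Icc 1 s, y i :=
  product_decrease_general s hs x y hmono hy0 hyx
end

section
/- Let r ≥ 2 be an integer and suppose 0 ≤ a₁ ≤ a₂ ≤ … ≤ a_r ≤ 1 are real numbers with Σ_{i=1}^r aᵢ ≥ r − 1. Then ∏_{i=2}^r aᵢ ≥ ((r−1)/r)^{r−1}, with equality if and only if aᵢ = (r−1)/r for every i. -/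
/-! Put `m = a₁` and `c = (r - 1) / r`. If `m ≥ c`, every factor is at least `c`, and equality
forces all of them to be `c`. If `m < c`, the deficits `1 - aᵢ` (`i ≥ 2`) lie in `[0, 1 - m]` and
sum to at most `m`; convexity of `t ↦ m ^ t` gives `aᵢ ≥ m ^ ((1 - aᵢ) / (1 - m))`, so the product
is at least `m ^ (m / (1 - m))`. This is strictly decreasing in `m` on `[0, 1)` (it is
`((1 + 1/u) ^ u)⁻¹` for `u = m / (1 - m)`) and equals `c ^ (r - 1)` at `m = c`, so the bound is
strict in this case. -/

open Finset

theorem Finset.prod_eq_prod_iff_of_pos_of_le {ι R : Type*} [CommMonoidWithZero R] [PartialOrder R]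
    [ZeroLEOneClass R] [PosMulStrictMono R] [Nontrivial R] {s : Finset ι} {f g : ι → R}
    (hf : ∀ i ∈ s, 0 < f i) (hfg : ∀ i ∈ s, f i ≤ g i) :
    ∏ i ∈ s, f i = ∏ i ∈ s, g i ↔ ∀ i ∈ s, f i = g i := by
  refine ⟨fun h => ?_, prod_congr rfl⟩
  by_contra! hne
  obtain ⟨i, hi, hfgi⟩ := hne
  exact (prod_lt_prod hf hfg ⟨i, hi, lt_of_le_of_ne (hfg i hi) hfgi⟩).ne h

namespace Real

theorem one_add_inv_rpow_strictMonoOn :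
    StrictMonoOn (fun u : ℝ => (1 + u⁻¹) ^ u) (Set.Ioi 0) := by
  intro u (hu : 0 < u) v (hv : 0 < v) huv
  have hvu : 1 < v / u := (one_lt_div hu).2 huv
  have hB : 1 + v / u * v⁻¹ < (1 + v⁻¹) ^ (v / u) :=
    one_add_mul_self_lt_rpow_one_add (by linarith [inv_pos.2 hv]) (inv_pos.2 hv).ne' hvu
  rw [show 1 + v / u * v⁻¹ = 1 + u⁻¹ by field_simp] at hB
  calc (1 + u⁻¹) ^ u < ((1 + v⁻¹) ^ (v / u)) ^ u := rpow_lt_rpow (by positivity) hB hu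
    _ = (1 + v⁻¹) ^ v := by
        rw [← rpow_mul (by positivity), div_mul_cancel₀ _ hu.ne']

theorem rpow_div_one_sub_strictAntiOn :
    StrictAntiOn (fun m : ℝ => m ^ (m / (1 - m))) (Set.Ico 0 1) := by
  intro m ⟨hm0, hm1⟩ c ⟨hc0, hc1⟩ hmc
  have hc : 0 < c := hm0.trans_lt hmc
  rcases hm0.eq_or_lt with rfl | hm
  · simpa using rpow_lt_one hc.le hc1 (div_pos hc (sub_pos.2 hc1))
  have key : ∀ x : ℝ, 0 < x → x < 1 →
      x ^ (x / (1 - x)) = ((1 + (x / (1 - x))⁻¹) ^ (x / (1 - x)))⁻¹ := by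
    intro x hx hx1
    have : 1 + (x / (1 - x))⁻¹ = x⁻¹ := by field_simp; ring
    rw [this, inv_rpow hx.le, inv_inv]
  have hu : 0 < m / (1 - m) := div_pos hm (sub_pos.2 hm1)
  have huv : m / (1 - m) < c / (1 - c) := by
    rw [div_lt_div_iff₀ (sub_pos.2 hm1) (sub_pos.2 hc1)]; nlinarith
  simp only
  rw [key m hm hm1, key c hc hc1]
  exact inv_strictAnti₀ (by positivity) (one_add_inv_rpow_strictMonoOn hu (hu.trans huv) huv)

theorem rpow_div_one_sub_le {m x : ℝ} (hm0 : 0 ≤ m) (hm1 : m < 1) (hmx : m ≤ x)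
    (hx1 : x ≤ 1) :
    m ^ ((1 - x) / (1 - m)) ≤ x := by
  have h := rpow_one_add_le_one_add_mul_self (s := m - 1) (by linarith)
    (div_nonneg (sub_nonneg.2 hx1) (sub_pos.2 hm1).le)
    ((div_le_one (sub_pos.2 hm1)).2 (by linarith))
  rwa [add_sub_cancel, show 1 + (1 - x) / (1 - m) * (m - 1) = x by
    field_simp [(sub_pos.2 hm1).ne']; ring] at h

theorem rpow_div_one_sub_le_prod {ι : Type*} {s : Finset ι} {x : ι → ℝ} {m : ℝ}
    (hm0 : 0 ≤ m) (hm1 : m < 1) (hx : ∀ i ∈ s, m ≤ x i ∧ x i ≤ 1)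
    (hsum : ∑ i ∈ s, (1 - x i) ≤ m) :
    m ^ (m / (1 - m)) ≤ ∏ i ∈ s, x i := by
  have hexp_nonneg : ∀ i ∈ s, 0 ≤ (1 - x i) / (1 - m) :=
    fun i hi => div_nonneg (sub_nonneg.2 (hx i hi).2) (sub_pos.2 hm1).le
  calc m ^ (m / (1 - m)) ≤ m ^ ((∑ i ∈ s, (1 - x i)) / (1 - m)) :=
        rpow_le_rpow_of_exponent_ge' hm0 hm1.le
          (div_nonneg (sum_nonneg fun i hi => sub_nonneg.2 (hx i hi).2) (sub_pos.2 hm1).le)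
          (div_le_div_of_nonneg_right hsum (sub_pos.2 hm1).le)
    _ = ∏ i ∈ s, m ^ ((1 - x i) / (1 - m)) := by
        rw [sum_div, rpow_sum_of_nonneg hm0 hexp_nonneg]
    _ ≤ ∏ i ∈ s, x i :=
        prod_le_prod (fun _ _ => rpow_nonneg hm0 _)
          fun i hi => rpow_div_one_sub_le hm0 hm1 (hx i hi).1 (hx i hi).2

theorem pow_card_lt_prod_of_sum_one_sub_le {ι : Type*} {s : Finset ι} {x : ι → ℝ} {m c : ℝ}
    (hm0 : 0 ≤ m) (hmc : m < c) (hc1 : c < 1) (hs : (#s : ℝ) = c / (1 - c))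
    (hx : ∀ i ∈ s, m ≤ x i ∧ x i ≤ 1) (hsum : ∑ i ∈ s, (1 - x i) ≤ m) :
    c ^ #s < ∏ i ∈ s, x i :=
  calc c ^ #s = c ^ (c / (1 - c)) := by rw [← hs, rpow_natCast]
    _ < m ^ (m / (1 - m)) :=
      rpow_div_one_sub_strictAntiOn ⟨hm0, hmc.trans hc1⟩ ⟨hm0.trans hmc.le, hc1⟩ hmc
    _ ≤ ∏ i ∈ s, x i := rpow_div_one_sub_le_prod hm0 (hmc.trans hc1) hx hsum

end Real

theorem sum_Icc_two_one_sub_le {r : ℕ} (hr : 1 ≤ r) {a : ℕ → ℝ}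
    (hsum : (r : ℝ) - 1 ≤ ∑ i ∈ Icc 1 r, a i) :
    ∑ i ∈ Icc 2 r, (1 - a i) ≤ a 1 := by
  rw [← insert_Icc_add_one_left_eq_Icc hr, sum_insert (by simp), one_add_one_eq_two] at hsum
  rw [sum_sub_distrib, sum_const, Nat.card_Icc, nsmul_one, Nat.cast_sub (by omega)]
  push_cast
  linarith

/-- If `0 ≤ a₁ ≤ … ≤ a_r ≤ 1` with `Σᵢ aᵢ ≥ r - 1`, then
`∏_{i=2}^r aᵢ ≥ ((r-1)/r)^(r-1)`, with equality iff every `aᵢ = (r-1)/r`. -/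
theorem product_lower_bound (r : ℕ) (hr : 2 ≤ r) (a : ℕ → ℝ)
    (h0 : 0 ≤ a 1) (h1 : a r ≤ 1)
    (hmono : ∀ i ∈ Finset.Icc 1 r, ∀ j ∈ Finset.Icc 1 r, i ≤ j → a i ≤ a j)
    (hsum : (r : ℝ) - 1 ≤ ∑ i ∈ Finset.Icc 1 r, a i) :
    (((r : ℝ) - 1) / r) ^ (r - 1) ≤ ∏ i ∈ Finset.Icc 2 r, a i ∧
      (∏ i ∈ Finset.Icc 2 r, a i = (((r : ℝ) - 1) / r) ^ (r - 1) ↔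
        ∀ i ∈ Finset.Icc 1 r, a i = ((r : ℝ) - 1) / r) := by
  set c : ℝ := ((r : ℝ) - 1) / r with hc
  have hr' : (2 : ℝ) ≤ r := by exact_mod_cast hr
  have hc0 : 0 < c := div_pos (by linarith) (by linarith)
  have hc1 : c < 1 := (div_lt_one (by linarith)).2 (by linarith)
  have hcard : #(Icc 2 r) = r - 1 := by simp
  have hcard_eq : (#(Icc 2 r) : ℝ) = c / (1 - c) := by
    rw [hcard, Nat.cast_sub (by omega), hc]
    field_simp
    ring
  have hsplit : Icc 1 r = insert 1 (Icc 2 r) := (insert_Icc_add_one_left_eq_Icc (by omega)).symm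
  have hbounds : ∀ i ∈ Icc 2 r, a 1 ≤ a i ∧ a i ≤ 1 := by
    intro i hi
    have hi' := mem_Icc.1 hi
    exact ⟨hmono 1 (by simp; omega) i (by simp; omega) (by omega),
      (hmono i (by simp; omega) r (by simp; omega) hi'.2).trans h1⟩
  have hlt (h : a 1 < c) : c ^ (r - 1) < ∏ i ∈ Icc 2 r, a i := hcard ▸
    Real.pow_card_lt_prod_of_sum_one_sub_le h0 h hc1 hcard_eq hbounds
      (sum_Icc_two_one_sub_le (by omega) hsum)
  have hconst : c ^ (r - 1) = ∏ _i ∈ Icc 2 r, c := by rw [prod_const, hcard]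
  refine ⟨?_, fun hprod => ?_, fun hall => ?_⟩
  · rcases lt_or_ge (a 1) c with h | h
    · exact (hlt h).le
    · rw [hconst]
      exact prod_le_prod (fun _ _ => hc0.le) fun i hi => h.trans (hbounds i hi).1
  · have hca : c ≤ a 1 := not_lt.1 fun h => (hlt h).ne' hprod
    have hall : ∀ i ∈ Icc 2 r, c = a i :=
      (prod_eq_prod_iff_of_pos_of_le (fun _ _ => hc0) fun i hi => hca.trans (hbounds i hi).1).1
        (hconst ▸ hprod.symm)
    have h2 : 2 ∈ Icc 2 r := by simp; omega
    have ha1 : a 1 = c := le_antisymm ((hbounds 2 h2).1.trans (hall 2 h2).ge) hca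
    rw [hsplit, forall_mem_insert]
    exact ⟨ha1, fun i hi => (hall i hi).symm⟩
  · rw [prod_congr rfl fun i hi => hall i (hsplit ▸ mem_insert_of_mem hi), ← hconst]
end

section
/- Let H be a finite graph with at least two vertices and let H' be the graph obtained from H by removing a single vertex (together with all edges incident to it). Then r(H') ≤ r(H) ≤ 2·v(H')·r(H'), where v(H') is the number of vertices of H'. -/
/-- A 2-coloring `χ` of the edges of `K_n` contains a monochromatic copy of `H`. -/
def HasMonoCopy {α : Type*} (H : SimpleGraph α) (n : ℕ) (χ : Sym2 (Fin n) → Bool) : Prop :=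
  ∃ (b : Bool) (f : α ↪ Fin n), ∀ u v : α, H.Adj u v → χ s(f u, f v) = b

/-- The Ramsey number of a graph `H`: the least `n` such that every red/blue coloring of the
edges of `K_n` contains a monochromatic copy of `H`. -/
noncomputable def ramseyNumber {α : Type*} (H : SimpleGraph α) : ℕ :=
  sInf {n : ℕ | ∀ χ : Sym2 (Fin n) → Bool, HasMonoCopy H n χ}


/-!
Let `m = v(H')`, `r = r(H')` and colour the edges of `K_{2mr}`. Some vertex `u₀` has at least `mr`
neighbours in one colour `b`; call them `N`. If some `x ∈ N` has at least `r` neighbours of colour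
`!b` inside `N`, they span a monochromatic `H'`, which extends to `H` through `x` if it has colour
`!b` and through `u₀` if it has colour `b`. Otherwise colour `!b` is sparse on `N`, so a greedy
argument finds a `b`-clique of size `m` in `N`, and the copy of `H'` it contains extends through
`u₀`.

If no `n` arrows `H'`, then none arrows `H` either and both Ramsey numbers are the junk value `0`.
-/

open Finset SimpleGraph

section Coloring

variable {V α : Type*}

def colorGraph (χ : Sym2 V → Bool) (b : Bool) : SimpleGraph V where
  Adj x y := x ≠ y ∧ χ s(x, y) = b
  symm := ⟨fun _ _ h => ⟨h.1.symm, Sym2.eq_swap ▸ h.2⟩⟩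
  loopless := ⟨fun _ h => h.1 rfl⟩

@[simp]
lemma colorGraph_adj {χ : Sym2 V → Bool} {b : Bool} {x y : V} :
    (colorGraph χ b).Adj x y ↔ x ≠ y ∧ χ s(x, y) = b :=
  Iff.rfl

instance [DecidableEq V] (χ : Sym2 V → Bool) (b : Bool) : DecidableRel (colorGraph χ b).Adj :=
  fun _ _ => decidable_of_iff' _ colorGraph_adj

lemma compl_colorGraph (χ : Sym2 V → Bool) (b : Bool) : (colorGraph χ b)ᶜ = colorGraph χ !b := by
  ext x y
  cases b <;> simp +contextual

lemma exists_le_degree_colorGraph [Fintype V] [DecidableEq V] (χ : Sym2 V → Bool) (x : V)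
    {k : ℕ} (hk : 2 * k ≤ Fintype.card V) : ∃ b, k ≤ (colorGraph χ b).degree x := by
  have hsum := degree_compl (G := colorGraph χ true) (v := x)
  have hlt := (colorGraph χ true).degree_lt_card_verts x
  have hcompl : (colorGraph χ true)ᶜ.degree x = (colorGraph χ false).degree x := by
    congr! 1
    exact compl_colorGraph χ true
  by_contra! hsmall
  have := hsmall true
  have := hsmall false
  omega

lemma hasMonoCopy_iff_exists_isContained {n : ℕ} (H : SimpleGraph α)
    (χ : Sym2 (Fin n) → Bool) :
    HasMonoCopy H n χ ↔ ∃ b, H ⊑ colorGraph χ b := by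
  constructor
  · rintro ⟨b, f, hf⟩
    exact ⟨b, ⟨⟨f, fun huw => colorGraph_adj.2 ⟨f.injective.ne huw.ne, hf _ _ huw⟩⟩, f.injective⟩⟩
  · rintro ⟨b, ⟨f⟩⟩
    exact ⟨b, f.toEmbedding, fun u w huw => (colorGraph_adj.1 (f.toHom.map_adj huw)).2⟩

end Coloring

namespace SimpleGraph

variable {V α : Type*} {G : SimpleGraph V} {H : SimpleGraph α}

theorem isContained_of_isContained_induce_neighborSet {v : α} {x : V} {S : Set V}
    (hS : S ⊆ G.neighborSet x) (h : H.induce {u | u ≠ v} ⊑ G.induce S) : H ⊑ G := by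
  classical
  obtain ⟨f⟩ := h
  have hx (u : {u | u ≠ v}) : G.Adj x (f u) := hS (f u).2
  let F (a : α) : V := if ha : a = v then x else f ⟨a, ha⟩
  have hF_adj {a c : α} (hac : H.Adj a c) : G.Adj (F a) (F c) := by
    by_cases ha : a = v <;> by_cases hc : c = v
    · exact (H.ne_of_adj hac (ha.trans hc.symm)).elim
    · simpa [F, ha, hc] using hx ⟨c, hc⟩
    · simpa [F, ha, hc] using (hx ⟨a, ha⟩).symm
    · simpa [F, ha, hc] using
        f.toHom.map_adj (show (H.induce {u | u ≠ v}).Adj ⟨a, ha⟩ ⟨c, hc⟩ from hac)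
  have hF_inj : F.Injective := by
    intro a c hFac
    by_cases ha : a = v <;> by_cases hc : c = v
    · exact ha.trans hc.symm
    · simp only [F, dif_pos ha, dif_neg hc] at hFac
      exact absurd hFac (hx ⟨c, hc⟩).ne
    · simp only [F, dif_neg ha, dif_pos hc] at hFac
      exact absurd hFac.symm (hx ⟨a, ha⟩).ne
    · simp only [F, dif_neg ha, dif_neg hc] at hFac
      exact congrArg Subtype.val (f.injective (Subtype.ext hFac))
  exact ⟨⟨⟨F, hF_adj⟩, hF_inj⟩⟩

theorem IsNClique.isContained_induce [Fintype α] {T : Finset V}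
    (hT : G.IsNClique (Fintype.card α) T) (H : SimpleGraph α) : H ⊑ G.induce T := by
  rw [induce_eq_top.2 hT.isClique]
  exact isContained_top_iff.2 (Function.Embedding.nonempty_of_card_le (by simp [hT.card_eq]))

theorem exists_isNClique_of_card_compl_adj_le [DecidableEq V] [DecidableRel G.Adj] {d : ℕ} :
    ∀ {m : ℕ} {N : Finset V}, (∀ x ∈ N, #{y ∈ N | Gᶜ.Adj x y} ≤ d) → m * (d + 1) ≤ #N →
      ∃ T ⊆ N, G.IsNClique m T
  | 0, _, _, _ => ⟨∅, empty_subset _, isNClique_empty.2 rfl⟩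
  | m + 1, N, hsparse, hN => by
    obtain ⟨x, hx⟩ : N.Nonempty := card_pos.1 (by nlinarith)
    have hnonadj : {y ∈ N | ¬G.Adj x y} ⊆ insert x {y ∈ N | Gᶜ.Adj x y} := by
      intro y hy
      rw [mem_filter] at hy
      rw [mem_insert, mem_filter, compl_adj]
      by_cases hxy : x = y
      · exact .inl hxy.symm
      · exact .inr ⟨hy.1, hxy, hy.2⟩
    have hN' : m * (d + 1) ≤ #{y ∈ N | G.Adj x y} := by
      have := card_filter_add_card_filter_not (s := N) (G.Adj x)
      have := (card_le_card hnonadj).trans (card_insert_le _ _)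
      have := hsparse x hx
      nlinarith
    obtain ⟨T, hT, hTclique⟩ := exists_isNClique_of_card_compl_adj_le
      (fun y hy => (card_le_card (filter_subset_filter _ (filter_subset _ _))).trans
        (hsparse y (filter_subset _ _ hy))) hN'
    exact ⟨insert x T, insert_subset hx (hT.trans (filter_subset _ _)),
      hTclique.insert fun y hy => (mem_filter.1 (hT hy)).2⟩

end SimpleGraph

/-- Ramsey's arrow relation `n → H`. -/
def Arrows {α : Type*} (n : ℕ) (H : SimpleGraph α) : Prop :=
  ∀ χ : Sym2 (Fin n) → Bool, HasMonoCopy H n χ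

namespace Arrows

variable {V α β : Type*} {H : SimpleGraph α} {n r : ℕ}

lemma mono {H' : SimpleGraph β} (h : Arrows n H) (hH' : H' ⊑ H) : Arrows n H' := fun χ => by
  obtain ⟨b, hb⟩ := (hasMonoCopy_iff_exists_isContained H χ).1 (h χ)
  exact (hasMonoCopy_iff_exists_isContained H' χ).2 ⟨b, hH'.trans hb⟩

lemma card_le (h : Arrows n H) : Nat.card α ≤ n := by
  obtain ⟨-, f, -⟩ := h fun _ => true
  simpa using Finite.card_le_of_embedding f

lemma exists_isContained_induce (h : Arrows r H) (χ : Sym2 V → Bool) {S : Finset V}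
    (hS : r ≤ #S) : ∃ b, H ⊑ (colorGraph χ b).induce S := by
  obtain ⟨g, hgS⟩ := Function.Embedding.exists_of_card_le_finset (α := Fin r) (by simpa using hS)
  obtain ⟨b, hb⟩ := (hasMonoCopy_iff_exists_isContained H _).1 (h fun e => χ (e.map g))
  refine ⟨b, hb.trans ⟨⟨⟨fun i => ⟨g i, hgS ⟨i, rfl⟩⟩, fun {i j} hij => ?_⟩, ?_⟩⟩⟩
  · exact colorGraph_adj.2 ⟨g.injective.ne (colorGraph_adj.1 hij).1, (colorGraph_adj.1 hij).2⟩
  · exact fun i j hij => g.injective (congrArg Subtype.val hij)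

theorem of_induce_ne [Fintype α] {v : α} (hα : 2 ≤ Fintype.card α)
    (h : Arrows r (H.induce {u | u ≠ v})) : Arrows (2 * (Fintype.card α - 1) * r) H := by
  classical
  set m := Fintype.card α - 1
  have hm : Fintype.card {u | u ≠ v} = m := Set.card_ne_eq v
  have hr : 0 < r := by
    have := h.card_le
    rw [Nat.card_eq_fintype_card, hm] at this
    omega
  intro χ
  rw [hasMonoCopy_iff_exists_isContained]
  obtain ⟨u₀⟩ : Nonempty (Fin (2 * m * r)) := ⟨⟨0, Nat.mul_pos (by omega) hr⟩⟩
  obtain ⟨b, hb⟩ := exists_le_degree_colorGraph χ u₀ (k := m * r) (by simp [mul_assoc])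
  set G := colorGraph χ b
  set N := G.neighborFinset u₀
  by_cases hsparse : ∀ x ∈ N, #{y ∈ N | Gᶜ.Adj x y} ≤ r - 1
  · obtain ⟨T, hTN, hT⟩ := exists_isNClique_of_card_compl_adj_le
      (m := Fintype.card {u | u ≠ v}) hsparse (by rwa [hm, Nat.sub_add_cancel hr])
    refine ⟨b, isContained_of_isContained_induce_neighborSet (x := u₀) ?_ (hT.isContained_induce _)⟩
    rw [← coe_neighborFinset]
    exact_mod_cast hTN
  · push Not at hsparse
    obtain ⟨x, hxN, hx⟩ := hsparse
    obtain ⟨c, hc⟩ := h.exists_isContained_induce χ (S := {y ∈ N | Gᶜ.Adj x y}) (by omega)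
    refine ⟨c, ?_⟩
    rcases Bool.eq_or_eq_not c b with rfl | rfl
    · exact isContained_of_isContained_induce_neighborSet (x := u₀)
        (fun y hy => (mem_neighborFinset _ _ _).1 (mem_filter.1 hy).1) hc
    · refine isContained_of_isContained_induce_neighborSet (x := x) (fun y hy => ?_) hc
      simpa [G, compl_colorGraph] using (mem_filter.1 hy).2

end Arrows

lemma arrows_ramseyNumber {α : Type*} {H : SimpleGraph α} (h : ∃ n, Arrows n H) :
    Arrows (ramseyNumber H) H :=
  Nat.sInf_mem h

lemma ramseyNumber_le {α : Type*} {H : SimpleGraph α} {n : ℕ} (h : Arrows n H) :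
    ramseyNumber H ≤ n :=
  Nat.sInf_le h

lemma ramseyNumber_eq_zero {α : Type*} {H : SimpleGraph α} (h : ∀ n, ¬Arrows n H) :
    ramseyNumber H = 0 :=
  Nat.sInf_eq_zero.2 (.inr (Set.eq_empty_of_forall_notMem h))

theorem ramsey_vertex_removal_general {α : Type*} [Fintype α]
    (H : SimpleGraph α) (hcard : 2 ≤ Fintype.card α) (v : α) :
    ramseyNumber (H.induce {u : α | u ≠ v}) ≤ ramseyNumber H ∧
      ramseyNumber H ≤
        2 * (Fintype.card α - 1) * ramseyNumber (H.induce {u : α | u ≠ v}) := by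
  have hH' : H.induce {u | u ≠ v} ⊑ H := (Copy.induce H _).isContained
  by_cases hexists : ∃ n, Arrows n (H.induce {u | u ≠ v})
  · have hH := (arrows_ramseyNumber hexists).of_induce_ne hcard
    exact ⟨ramseyNumber_le ((arrows_ramseyNumber ⟨_, hH⟩).mono hH'), ramseyNumber_le hH⟩
  · push Not at hexists
    have hnone (n : ℕ) : ¬Arrows n H := fun h => hexists n (h.mono hH')
    simp [ramseyNumber_eq_zero hexists, ramseyNumber_eq_zero hnone]

/-- If `H'` is obtained from `H` by deleting one vertex, then
`r(H') ≤ r(H) ≤ 2 v(H') r(H')`. -/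
theorem ramsey_vertex_removal {α : Type*} [Fintype α] [DecidableEq α]
    (H : SimpleGraph α) (hcard : 2 ≤ Fintype.card α) (v : α) :
    ramseyNumber (H.induce {u : α | u ≠ v}) ≤ ramseyNumber H ∧
      ramseyNumber H ≤
        2 * (Fintype.card α - 1) * ramseyNumber (H.induce {u : α | u ≠ v}) :=
  ramsey_vertex_removal_general H hcard v
end
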